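/- arXiv:math/0310157 — 5 statements merged into one kernel-verified Lean document; each statement's English description precedes it below -/
import Mathlib

section
/- The map sending a permutation of [n] to the list of reduced (unlabeled) forms of its restrictions to its components is a bijection between permutations of [n] and lists of connected permutations whose lengths sum to n. -/
/-! A cut of `σ` is a `k` with `σ [0, k) ⊆ [0, k)`. At its smallest positive cut `c`, `σ` is
the gluing of a permutation of `[c]`, connected by minimality of `c`, and a permutation of
`[n - c]` whose cuts are those of `σ` above `c`, shifted down by `c`. Peeling off this first
component recursively produces the list of components, and gluing the list back is the inverse
map: a connected block of length `a ≥ 1` glued in front has no positive cut below `a`, so it is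
recovered as the first component of the glued permutation. -/

def Stab {n : ℕ} (σ : Equiv.Perm (Fin n)) (S : Finset (Fin n)) : Prop :=
  S.image σ = S

/-- `σ` is connected: it stabilizes no proper nonempty initial interval of `[n]`. -/
def ConnectedP {m : ℕ} (τ : Equiv.Perm (Fin m)) : Prop :=
  ∀ k : ℕ, 1 ≤ k → k < m → ¬ Stab τ (Finset.univ.filter (fun i => (i : ℕ) < k))

/-- The sorted list of cut points of the finest partition of `[n]` into consecutive intervals
stabilized by `σ`: these are exactly the `k ∈ [0, n]` such that `σ` stabilizes the initial
segment of size `k`.  Consecutive entries delimit the components of `σ`. -/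
def cutList {n : ℕ} (σ : Equiv.Perm (Fin n)) : List ℕ :=
  ((Finset.range (n + 1)).filter
    (fun k => ∀ i : Fin n, (i : ℕ) < k → ((σ i : ℕ) < k))).sort (· ≤ ·)

/-- Lists of (unlabeled) connected permutations whose lengths sum to `n`. -/
def ConnList (n : ℕ) :=
  {L : List (Σ m : ℕ, Equiv.Perm (Fin m)) //
    (∀ p ∈ L, 1 ≤ p.1 ∧ ConnectedP p.2) ∧ (L.map (fun p => p.1)).sum = n}

namespace Equiv.Perm

variable {n c : ℕ} {σ : Perm (Fin n)}

def IsCut (σ : Perm (Fin n)) (k : ℕ) : Prop :=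
  ∀ i : Fin n, (i : ℕ) < k → (σ i : ℕ) < k

theorem stab_iff_isCut {k : ℕ} :
    Stab σ (Finset.univ.filter fun i => (i : ℕ) < k) ↔ IsCut σ k := by
  unfold Stab
  refine ⟨fun h i hi => ?_, fun h => ?_⟩
  · simpa using h.subset (Finset.mem_image_of_mem σ (by simpa using hi))
  · refine Finset.eq_of_subset_of_card_le (fun x hx => ?_)
      (Finset.card_image_of_injective _ σ.injective).ge
    obtain ⟨i, hi, rfl⟩ := Finset.mem_image.mp hx
    simpa using h i (by simpa using hi)

theorem connectedP_iff {τ : Perm (Fin n)} :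
    ConnectedP τ ↔ ∀ k, 0 < k → k < n → ¬ IsCut τ k := by
  simp only [ConnectedP, stab_iff_isCut]
  rfl

namespace IsCut

-- `σ` maps the finite set `[0, c)` injectively into, hence onto, itself.
theorem apply_lt_iff (h : IsCut σ c) (i : Fin n) : (σ i : ℕ) < c ↔ (i : ℕ) < c := by
  refine ⟨fun hi => ?_, h i⟩
  have hσ : Stab σ _ := stab_iff_isCut.mpr h
  obtain ⟨j, hj, hji⟩ := Finset.mem_image.mp (hσ.symm.subset (by simpa using hi))
  simpa [σ.injective hji] using hj

theorem le_apply (h : IsCut σ c) {i : Fin n} (hi : c ≤ (i : ℕ)) : c ≤ (σ i : ℕ) :=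
  not_lt.mp fun hσ => (not_lt.mpr hi) ((h.apply_lt_iff i).mp hσ)

noncomputable def lowPerm (h : IsCut σ c) (hcn : c ≤ n) : Perm (Fin c) :=
  Equiv.ofBijective (fun y => ⟨σ (Fin.castLE hcn y), h _ y.2⟩)
    (Finite.injective_iff_bijective.mp fun _ _ hab =>
      Fin.castLE_injective hcn (σ.injective (Fin.ext (Fin.mk.inj_iff.mp hab))))

theorem lowPerm_apply_val (h : IsCut σ c) (hcn : c ≤ n) {y : Fin c} {i : Fin n}
    (hi : (i : ℕ) = y) : (h.lowPerm hcn y : ℕ) = σ i := by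
  obtain rfl : i = Fin.castLE hcn y := Fin.ext hi
  rfl

noncomputable def highPerm (h : IsCut σ c) : Perm (Fin (n - c)) :=
  Equiv.ofBijective
    (fun y => ⟨σ ⟨c + y, by omega⟩ - c, by
      have := (σ ⟨c + y, by omega⟩).2; have := y.2; omega⟩)
    (Finite.injective_iff_bijective.mp fun a b hab => by
      have ha := h.le_apply (i := ⟨c + a, by omega⟩) (by simp)
      have hb := h.le_apply (i := ⟨c + b, by omega⟩) (by simp)
      have hab : (σ ⟨c + a, _⟩ : ℕ) - c = σ ⟨c + b, _⟩ - c := congrArg Fin.val hab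
      have := congrArg Fin.val <| σ.injective
        (a₁ := ⟨c + a, by omega⟩) (a₂ := ⟨c + b, by omega⟩) (Fin.ext (by omega))
      exact Fin.ext (by simpa using this))

theorem highPerm_apply_val (h : IsCut σ c) {y : Fin (n - c)} {i : Fin n}
    (hi : (i : ℕ) = c + y) : (h.highPerm y : ℕ) = σ i - c := by
  obtain rfl : i = ⟨c + y, Nat.add_lt_of_lt_sub' y.2⟩ := Fin.ext hi
  rfl

theorem isCut_lowPerm_iff (h : IsCut σ c) (hcn : c ≤ n) {k : ℕ} (hkc : k ≤ c) :
    IsCut (h.lowPerm hcn) k ↔ IsCut σ k := by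
  refine ⟨fun hk i hi => ?_, fun hk y hy => ?_⟩
  · rw [← h.lowPerm_apply_val hcn (y := ⟨i, by omega⟩) rfl]
    exact hk _ hi
  · rw [h.lowPerm_apply_val hcn (i := Fin.castLE hcn y) rfl]
    exact hk _ hy

theorem isCut_highPerm_iff (h : IsCut σ c) {k : ℕ} :
    IsCut h.highPerm k ↔ IsCut σ (c + k) := by
  refine ⟨fun hk i hi => ?_, fun hk y hy => ?_⟩
  · by_cases hic : (i : ℕ) < c
    · exact (h i hic).trans_le (Nat.le_add_right c k)
    · have := hk ⟨i - c, by omega⟩ (by simp; omega)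
      rw [h.highPerm_apply_val (i := i) (by simp; omega)] at this
      omega
  · rw [h.highPerm_apply_val (i := ⟨c + y, by omega⟩) rfl]
    have := hk ⟨c + y, by omega⟩ (by simpa using hy)
    omega

end IsCut

variable {a : ℕ} {τ : Perm (Fin a)} {ρ : Perm (Fin (n - a))}

noncomputable def glue (han : a ≤ n) (τ : Perm (Fin a)) (ρ : Perm (Fin (n - a))) :
    Perm (Fin n) :=
  (finSumFinEquiv.trans (finCongr (Nat.add_sub_cancel' han))).permCongr (τ.sumCongr ρ)

theorem glue_apply_val_of_lt (han : a ≤ n) {x : Fin n} (hx : (x : ℕ) < a) :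
    (glue han τ ρ x : ℕ) = τ ⟨x, hx⟩ := by
  have : (finSumFinEquiv.trans (finCongr (Nat.add_sub_cancel' han))).symm x = .inl ⟨x, hx⟩ :=
    Equiv.symm_apply_eq _ |>.mpr (Fin.ext (by simp))
  rw [glue, Equiv.permCongr_apply, this]
  simp

theorem glue_apply_val_of_le (han : a ≤ n) {x : Fin n} (hx : a ≤ (x : ℕ)) :
    (glue han τ ρ x : ℕ) = a + ρ ⟨x - a, by omega⟩ := by
  have : (finSumFinEquiv.trans (finCongr (Nat.add_sub_cancel' han))).symm x =
      .inr ⟨x - a, by omega⟩ :=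
    Equiv.symm_apply_eq _ |>.mpr (Fin.ext (by simp; omega))
  rw [glue, Equiv.permCongr_apply, this]
  simp

theorem isCut_glue (han : a ≤ n) : IsCut (glue han τ ρ) a := fun x hx => by
  simp [glue_apply_val_of_lt han hx]

theorem IsCut.glue_lowPerm_highPerm (h : IsCut σ c) (hcn : c ≤ n) :
    glue hcn (h.lowPerm hcn) h.highPerm = σ := by
  ext x
  by_cases hx : (x : ℕ) < c
  · rw [glue_apply_val_of_lt hcn hx, h.lowPerm_apply_val hcn rfl]
  · rw [glue_apply_val_of_le hcn (not_lt.mp hx), h.highPerm_apply_val (i := x) (by simp; omega)]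
    have := h.le_apply (not_lt.mp hx)
    omega

theorem lowPerm_glue (han : a ≤ n) (h : IsCut (glue han τ ρ) a) : h.lowPerm han = τ := by
  ext y
  rw [h.lowPerm_apply_val han (i := Fin.castLE han y) rfl, glue_apply_val_of_lt han y.2]
  rfl

theorem highPerm_glue (han : a ≤ n) (h : IsCut (glue han τ ρ) a) : h.highPerm = ρ := by
  ext y
  rw [h.highPerm_apply_val (i := ⟨a + y, by omega⟩) rfl,
    glue_apply_val_of_le han (Nat.le_add_right a y)]
  simp

structure IsFirstCut (σ : Perm (Fin n)) (c : ℕ) : Prop where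
  pos : 0 < c
  isCut : IsCut σ c
  not_isCut : ∀ k, 0 < k → k < c → ¬ IsCut σ k

theorem IsFirstCut.le (h : IsFirstCut σ c) (hn : 0 < n) : c ≤ n :=
  not_lt.mp fun hnc => h.not_isCut n hn hnc fun i _ => (σ i).2

theorem IsFirstCut.unique {d : ℕ} (hc : IsFirstCut σ c) (hd : IsFirstCut σ d) : c = d := by
  by_contra hcd
  rcases Nat.lt_or_gt_of_ne hcd with hlt | hlt
  · exact hd.not_isCut c hc.pos hlt hc.isCut
  · exact hc.not_isCut d hd.pos hlt hd.isCut

theorem exists_isFirstCut (σ : Perm (Fin n)) : ∃ c, IsFirstCut σ c := by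
  classical
  have hex : ∃ k, 0 < k ∧ IsCut σ k := ⟨n + 1, n.succ_pos, fun i _ => by omega⟩
  exact ⟨Nat.find hex, (Nat.find_spec hex).1, (Nat.find_spec hex).2,
    fun k hk hlt hcut => Nat.find_min hex hlt ⟨hk, hcut⟩⟩

noncomputable def firstCut (σ : Perm (Fin n)) : ℕ := (exists_isFirstCut σ).choose

theorem isFirstCut_firstCut (σ : Perm (Fin n)) : IsFirstCut σ (firstCut σ) :=
  (exists_isFirstCut σ).choose_spec

theorem IsCut.isFirstCut_iff (h : IsCut σ c) (hcn : c ≤ n) (hc : 0 < c) :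
    IsFirstCut σ c ↔ ConnectedP (h.lowPerm hcn) := by
  rw [connectedP_iff]
  refine ⟨fun hf k hk hkc => ?_, fun hconn => ⟨hc, h, fun k hk hkc => ?_⟩⟩
  · rw [h.isCut_lowPerm_iff hcn hkc.le]
    exact hf.not_isCut k hk hkc
  · rw [← h.isCut_lowPerm_iff hcn hkc.le]
    exact hconn k hk hkc

theorem isFirstCut_glue (han : a ≤ n) (ha : 0 < a) (hτ : ConnectedP τ) :
    IsFirstCut (glue han τ ρ) a := by
  rwa [(isCut_glue han).isFirstCut_iff han ha, lowPerm_glue]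

theorem induction_on_firstCut {motive : ∀ n, Perm (Fin n) → Prop}
    (zero : ∀ σ, motive 0 σ)
    (cons : ∀ n (σ : Perm (Fin n)) c (h : IsFirstCut σ c), c ≤ n →
      motive (n - c) h.isCut.highPerm → motive n σ) :
    ∀ n σ, motive n σ := by
  intro n
  induction n using Nat.strong_induction_on with
  | _ n ih =>
    intro σ
    rcases Nat.eq_zero_or_pos n with rfl | hn
    · exact zero σ
    · have h := isFirstCut_firstCut σ
      exact cons n σ _ h (h.le hn) (ih _ (Nat.sub_lt hn h.pos) _)

noncomputable def components : {n : ℕ} → Perm (Fin n) → List (Σ m, Perm (Fin m))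
  | 0, _ => []
  | n + 1, σ =>
    have h := isFirstCut_firstCut σ
    ⟨firstCut σ, h.isCut.lowPerm (h.le n.succ_pos)⟩ :: components h.isCut.highPerm
  termination_by n => n
  decreasing_by have := (isFirstCut_firstCut σ).pos; omega

theorem components_zero (σ : Perm (Fin 0)) : σ.components = [] := by
  rw [components]

theorem IsFirstCut.components_eq (h : IsFirstCut σ c) (hcn : c ≤ n) :
    σ.components = ⟨c, h.isCut.lowPerm hcn⟩ :: h.isCut.highPerm.components := by
  obtain rfl := h.unique (isFirstCut_firstCut σ)
  obtain ⟨m, rfl⟩ : ∃ m, n = m + 1 := Nat.exists_eq_add_one.mpr (h.pos.trans_le hcn)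
  rw [components]

theorem sum_map_fst_components (σ : Perm (Fin n)) :
    (σ.components.map (fun p => p.1)).sum = n := by
  induction n, σ using induction_on_firstCut with
  | zero σ => simp [components_zero]
  | cons n σ c h hcn ih => simp [h.components_eq hcn, ih]; omega

theorem connectedP_of_mem_components (σ : Perm (Fin n)) :
    ∀ p ∈ σ.components, 1 ≤ p.1 ∧ ConnectedP p.2 := by
  induction n, σ using induction_on_firstCut with
  | zero σ => simp [components_zero]
  | cons n σ c h hcn ih =>
    rw [h.components_eq hcn]
    rintro p (_ | ⟨_, hp⟩)
    · exact ⟨h.pos, (h.isCut.isFirstCut_iff hcn h.pos).mp h⟩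
    · exact ih p hp

noncomputable def glueList : (n : ℕ) → List (Σ m, Perm (Fin m)) → Perm (Fin n)
  | _, [] => 1
  | n, p :: L => if h : p.1 ≤ n then glue h p.2 (glueList (n - p.1) L) else 1

theorem glueList_components (σ : Perm (Fin n)) : glueList n σ.components = σ := by
  induction n, σ using induction_on_firstCut with
  | zero σ => exact Subsingleton.elim _ _
  | cons n σ c h hcn ih =>
    rw [h.components_eq hcn, glueList, dif_pos hcn, ih, h.isCut.glue_lowPerm_highPerm]

theorem components_glueList (L : List (Σ m, Perm (Fin m)))
    (hL : ∀ p ∈ L, 1 ≤ p.1 ∧ ConnectedP p.2) (hsum : (L.map (fun p => p.1)).sum = n) :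
    (glueList n L).components = L := by
  induction L generalizing n with
  | nil => subst hsum; exact components_zero _
  | cons p L ih =>
    simp only [List.map_cons, List.sum_cons] at hsum
    have hpn : p.1 ≤ n := by omega
    obtain ⟨hp, hpconn⟩ := hL p List.mem_cons_self
    rw [glueList, dif_pos hpn, (isFirstCut_glue hpn hp hpconn).components_eq hpn, lowPerm_glue,
      highPerm_glue, ih (fun q hq => hL q (List.mem_cons_of_mem p hq)) (by omega)]

noncomputable def componentsEquiv (n : ℕ) : Perm (Fin n) ≃ ConnList n where
  toFun σ := ⟨σ.components, connectedP_of_mem_components σ, sum_map_fst_components σ⟩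
  invFun L := glueList n L.1
  left_inv := glueList_components
  right_inv L := Subtype.ext (components_glueList L.1 L.2.1 L.2.2)

theorem mem_cutList {k : ℕ} : k ∈ cutList σ ↔ k ≤ n ∧ IsCut σ k := by
  simp [cutList, IsCut]

theorem pairwise_lt_cutList (σ : Perm (Fin n)) : (cutList σ).Pairwise (· < ·) :=
  (Finset.sortedLT_sort _).pairwise

theorem cutList_zero (σ : Perm (Fin 0)) : cutList σ = [0] := by
  refine (pairwise_lt_cutList σ).eq_of_mem_iff (List.pairwise_singleton _ _) fun k => ?_
  simp only [mem_cutList, List.mem_singleton, nonpos_iff_eq_zero, and_iff_left_iff_imp]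
  exact fun _ i => i.elim0

theorem IsFirstCut.cutList_eq (h : IsFirstCut σ c) (hcn : c ≤ n) :
    cutList σ = 0 :: (cutList h.isCut.highPerm).map (c + ·) := by
  refine (pairwise_lt_cutList σ).eq_of_mem_iff ?_ fun k => ?_
  · refine List.pairwise_cons.mpr ⟨?_, (pairwise_lt_cutList _).map _ fun _ _ => by omega⟩
    simp only [List.mem_map]
    rintro _ ⟨k, -, rfl⟩
    exact Nat.add_pos_left h.pos k
  · simp only [List.mem_cons, List.mem_map, mem_cutList, h.isCut.isCut_highPerm_iff]
    constructor
    · rintro ⟨hkn, hk⟩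
      rcases Nat.eq_zero_or_pos k with rfl | hk0
      · exact .inl rfl
      · have hck : c ≤ k := not_lt.mp fun hkc => h.not_isCut k hk0 hkc hk
        exact .inr ⟨k - c, ⟨by omega, by rwa [Nat.add_sub_cancel' hck]⟩, by omega⟩
    · rintro (rfl | ⟨k, ⟨hk, hcut⟩, rfl⟩)
      · exact ⟨Nat.zero_le n, fun _ hi => absurd hi (Nat.not_lt_zero _)⟩
      · exact ⟨by omega, hcut⟩

theorem cutList_getElem?_zero (σ : Perm (Fin n)) : (cutList σ)[0]? = some 0 := by
  rcases Nat.eq_zero_or_pos n with rfl | hn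
  · rw [cutList_zero]; rfl
  · have h := isFirstCut_firstCut σ
    rw [h.cutList_eq (h.le hn)]; rfl

theorem length_components (σ : Perm (Fin n)) : σ.components.length + 1 = (cutList σ).length := by
  induction n, σ using induction_on_firstCut with
  | zero σ => rw [components_zero, cutList_zero]; rfl
  | cons n σ c h hcn ih => simp [h.components_eq hcn, h.cutList_eq hcn, ih]

def IsReducedRestriction (σ : Perm (Fin n)) (c d : ℕ) (p : Σ m, Perm (Fin m)) : Prop :=
  p.1 = d - c ∧ ∀ x : Fin n, c ≤ (x : ℕ) → (x : ℕ) < d →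
    ∃ y : Fin p.1, (y : ℕ) = x - c ∧ (p.2 y : ℕ) = σ x - c

theorem IsCut.isReducedRestriction_lowPerm (h : IsCut σ c) (hcn : c ≤ n) :
    IsReducedRestriction σ 0 c ⟨c, h.lowPerm hcn⟩ :=
  ⟨rfl, fun x _ hxc => ⟨⟨x, hxc⟩, rfl, h.lowPerm_apply_val hcn rfl⟩⟩

theorem IsReducedRestriction.of_highPerm (h : IsCut σ c) {a b : ℕ} {p : Σ m, Perm (Fin m)}
    (hp : IsReducedRestriction h.highPerm a b p) : IsReducedRestriction σ (c + a) (c + b) p := by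
  refine ⟨by rw [hp.1]; omega, fun x hax hxb => ?_⟩
  obtain ⟨y, hy, hpy⟩ := hp.2 ⟨x - c, by omega⟩ (by simp; omega) (by simp; omega)
  rw [h.highPerm_apply_val (i := x) (by simp; omega)] at hpy
  exact ⟨y, by simp at hy; omega, by omega⟩

theorem isReducedRestriction_components_get (σ : Perm (Fin n)) :
    ∀ (j : ℕ) (hj : j < σ.components.length) (cj cj1 : ℕ),
      (cutList σ)[j]? = some cj → (cutList σ)[j + 1]? = some cj1 →
        IsReducedRestriction σ cj cj1 (σ.components.get ⟨j, hj⟩) := by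
  induction n, σ using induction_on_firstCut with
  | zero σ => simp [components_zero]
  | cons n σ c h hcn ih =>
    rw [h.components_eq hcn, h.cutList_eq hcn]
    intro j hj cj cj1 hcj hcj1
    cases j with
    | zero =>
      simp only [List.getElem?_cons_zero, Option.some.injEq, zero_add, List.getElem?_cons_succ,
        List.getElem?_map, cutList_getElem?_zero, Option.map_some] at hcj hcj1
      subst hcj hcj1
      exact h.isCut.isReducedRestriction_lowPerm hcn
    | succ j =>
      simp only [List.getElem?_cons_succ, List.getElem?_map, Option.map_eq_some_iff] at hcj hcj1
      obtain ⟨a, ha, rfl⟩ := hcj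
      obtain ⟨b, hb, rfl⟩ := hcj1
      exact IsReducedRestriction.of_highPerm h.isCut (ih j _ a b ha hb)

end Equiv.Perm

/-- The map sending a permutation of `[n]` to the list of reduced (unlabeled) forms of its
restrictions to its components is a bijection between permutations of `[n]` and lists of
connected permutations whose lengths sum to `n`.  The `j`-th entry of the image list has
length `c_{j+1} - c_j` (where `c_0 < c_1 < ⋯` are the cut points delimiting the components)
and acts as `x ↦ σ(x) - c_j` on `x ∈ [c_j, c_{j+1})`, i.e. it is the reduced form of the
restriction of `σ` to its `j`-th component. -/
theorem stmt4 (n : ℕ) :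
    ∃ e : Equiv.Perm (Fin n) ≃ ConnList n,
      ∀ σ : Equiv.Perm (Fin n),
        (e σ).1.length + 1 = (cutList σ).length ∧
        ∀ (j : ℕ) (hj : j < (e σ).1.length) (cj cj1 : ℕ),
          (cutList σ)[j]? = some cj → (cutList σ)[j + 1]? = some cj1 →
            ((e σ).1.get ⟨j, hj⟩).1 = cj1 - cj ∧
            ∀ x : Fin n, cj ≤ (x : ℕ) → (x : ℕ) < cj1 →
              ∃ y : Fin ((e σ).1.get ⟨j, hj⟩).1,
                (y : ℕ) = (x : ℕ) - cj ∧ ((((e σ).1.get ⟨j, hj⟩).2 y : ℕ)) = (σ x : ℕ) - cj :=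
  ⟨Equiv.Perm.componentsEquiv n, fun σ =>
    ⟨σ.length_components, σ.isReducedRestriction_components_get⟩⟩
end

section
/- If σ is a stabilized-interval-free permutation of [n-1] (n ≥ 2) and σ' is obtained from σ by inserting n into one of the cycles of σ (i.e., choosing i ∈ [n-1] and setting σ'(i) = n, σ'(n) = σ(i), σ'(j) = σ(j) for j ≠ i, j ≤ n-1), then σ' is a stabilized-interval-free permutation of [n]. -/
def SIF {n : ℕ} (σ : Equiv.Perm (Fin n)) : Prop :=
  ∀ a b : Fin n, (Finset.Icc a b).Nonempty → Finset.Icc a b ≠ Finset.univ →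
    ¬ Stab σ (Finset.Icc a b)

open Equiv Finset Fin

/-
Let `I` be a proper nonempty interval of `[n]` stabilized by `σ'`. The element `n` is not the
left end of `I`, since `σ'` sends it below itself. Removing `n` from `I` leaves an interval `J`
of `[n-1]`, and `J` is stabilized by `σ`: for `j ∈ J` with `j ≠ i` we have `σ j = σ' j`, while
`σ i = σ' (σ' i) = σ' n`. Finally `J` is proper: otherwise `i ∈ J`, so `n = σ' i ∈ I`, and then
`I` would contain all of `[n]`.
-/

lemma stab_iff_forall_mem {n : ℕ} {σ : Perm (Fin n)} {S : Finset (Fin n)} :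
    Stab σ S ↔ ∀ x ∈ S, σ x ∈ S := by
  rw [Stab, ← image_subset_iff]
  refine ⟨fun h ↦ h.subset, fun h ↦ eq_of_subset_of_card_le h ?_⟩
  rw [card_image_of_injective _ σ.injective]

lemma exists_mem_Icc_iff_castSucc_mem_Icc {n : ℕ} (a : Fin n) (b : Fin (n + 1)) :
    ∃ b' : Fin n, ∀ j : Fin n, j ∈ Icc a b' ↔ castSucc j ∈ Icc (castSucc a) b := by
  refine ⟨⟨min b (n - 1), by have := a.pos; omega⟩, fun j ↦ ?_⟩
  simp only [mem_Icc, le_iff_val_le_val, val_castSucc]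
  omega

lemma castSucc_apply_mem_of_insertion {n : ℕ} {σ : Perm (Fin n)} {i : Fin n}
    {σ' : Perm (Fin (n + 1))} (h1 : σ' (castSucc i) = last n)
    (h2 : σ' (last n) = castSucc (σ i))
    (h3 : ∀ j : Fin n, j ≠ i → σ' (castSucc j) = castSucc (σ j))
    {T : Finset (Fin (n + 1))} (hT : ∀ x ∈ T, σ' x ∈ T) {j : Fin n} (hj : castSucc j ∈ T) :
    castSucc (σ j) ∈ T := by
  obtain rfl | hji := eq_or_ne j i
  · rw [← h2, ← h1]
    exact hT _ (hT _ hj)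
  · rw [← h3 j hji]
    exact hT _ hj

theorem stmt5_general (n : ℕ) (σ : Equiv.Perm (Fin n)) (hσ : SIF σ) (i : Fin n)
    (σ' : Equiv.Perm (Fin (n + 1)))
    (h1 : σ' (Fin.castSucc i) = Fin.last n)
    (h2 : σ' (Fin.last n) = Fin.castSucc (σ i))
    (h3 : ∀ j : Fin n, j ≠ i → σ' (Fin.castSucc j) = Fin.castSucc (σ j)) :
    SIF σ' := by
  intro a b hne hproper hstab
  rw [stab_iff_forall_mem] at hstab
  have hab : a ≤ b := nonempty_Icc.1 hne
  have ha : a ≠ last n := by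
    rintro rfl
    have hσ'last := hstab _ (mem_Icc.2 ⟨le_rfl, hab⟩)
    rw [h2, mem_Icc] at hσ'last
    exact (castSucc_lt_last _).not_ge hσ'last.1
  obtain ⟨a, rfl⟩ := exists_castSucc_eq.2 ha
  obtain ⟨b', hJ⟩ := exists_mem_Icc_iff_castSucc_mem_Icc a b
  refine hσ a b' ⟨a, (hJ a).2 (mem_Icc.2 ⟨le_rfl, hab⟩)⟩ (fun hJuniv ↦ hproper ?_) ?_
  · have hlast : last n ∈ Icc (castSucc a) b := h1 ▸ hstab _ ((hJ i).1 (hJuniv ▸ mem_univ i))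
    have ha0 : a ≤ ⟨0, a.pos⟩ := (mem_Icc.1 (hJuniv ▸ mem_univ _)).1
    ext x
    simp only [mem_Icc, le_iff_val_le_val, val_castSucc, val_last, mem_univ, iff_true] at hlast ha0 ⊢
    omega
  · rw [stab_iff_forall_mem]
    exact fun j hj ↦ (hJ _).2 (castSucc_apply_mem_of_insertion h1 h2 h3 hstab ((hJ j).1 hj))

/-- If `σ` is a SIF permutation of `[n-1]` (here `[n-1]` is `Fin n` with `n ≥ 1`, so the
original `n`, namely `n+1`, is at least `2`) and `σ'` is obtained from `σ` by inserting the
largest element `n` into the cycle of `σ` after `i`, then `σ'` is SIF on `[n]`. -/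
theorem stmt5 (n : ℕ) (hn : 1 ≤ n) (σ : Equiv.Perm (Fin n)) (hσ : SIF σ) (i : Fin n)
    (σ' : Equiv.Perm (Fin (n + 1)))
    (h1 : σ' (Fin.castSucc i) = Fin.last n)
    (h2 : σ' (Fin.last n) = Fin.castSucc (σ i))
    (h3 : ∀ j : Fin n, j ≠ i → σ' (Fin.castSucc j) = Fin.castSucc (σ j)) :
    SIF σ' :=
  stmt5_general n σ hσ i σ' h1 h2 h3
end

section
/- Let n ≥ 2 and let σ be a permutation of [n] such that there exists an interior interval I = [k+1, n-j+k-1] of [n-1] (with 1 ≤ k < j ≤ n-2) for which σ stabilizes I ∪ {n}. Suppose the restriction ρ' of σ to I ∪ {n} is SIF (as a permutation of the totally ordered set I ∪ {n}) and the restriction τ of σ to [n-1] \ I is SIF (as a permutation of the totally ordered set [n-1] \ I), and σ⁻¹(n) ∈ I ∪ {n} with σ(n) ∈ I. Then σ is SIF on [n]. -/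
/-- `σ` (stabilizing `T`) is SIF as a permutation of the totally ordered set `T`:
it stabilizes no proper nonempty interval of `T` (a set of consecutive elements of `T`,
i.e. a set of the form `T ∩ [a,b]`). -/
def SIFOn {n : ℕ} (σ : Equiv.Perm (Fin n)) (T : Finset (Fin n)) : Prop :=
  ∀ a b : Fin n, (T ∩ Finset.Icc a b).Nonempty → T ∩ Finset.Icc a b ≠ T →
    ¬ Stab σ (T ∩ Finset.Icc a b)

/-- Elements of `[n]` are modeled as `Fin n`, the element `i+1 ∈ [n]` being `i : Fin n`.
`intervalI n k j` is the interior interval `I = [k+1, n-j+k-1]` of `[n-1]`: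
`i : Fin n` lies in it iff `k+1 ≤ i+1` and `i+1 ≤ n-j+k-1`. -/
def intervalI (n k j : ℕ) : Finset (Fin n) :=
  Finset.univ.filter (fun i => k ≤ (i : ℕ) ∧ (i : ℕ) + j + 2 ≤ n + k)

/-! A stabilized interval `J` of `σ` meets the two `σ`-stable blocks `T` and `Tᶜ` in
stabilized intervals of those blocks, so by SIF-ness of the blocks `J` either misses or
contains each block. When the blocks interleave as `x₀ < x₁ < x₂ < x₃` with
`x₀, x₂ ∉ T` and `x₁, x₃ ∈ T`, neither block fits in an interval missing the other,
so `J` is empty or everything. With `T = I ∪ {n}` one can take the elements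
`k < k+1 < n-j+k < n` of `[n]`. -/

namespace Stab

variable {n : ℕ} {σ : Equiv.Perm (Fin n)} {S T : Finset (Fin n)}

theorem compl (h : Stab σ T) : Stab σ (Finset.univ \ T) := by
  unfold Stab at *
  rw [Finset.image_sdiff _ _ σ.injective, Finset.image_univ_equiv, h]

theorem inter (hS : Stab σ S) (hT : Stab σ T) : Stab σ (S ∩ T) := by
  unfold Stab at *
  rw [Finset.image_inter _ _ σ.injective, hS, hT]

end Stab

theorem SIFOn.inter_Icc_eq_empty_or_eq {n : ℕ} {σ : Equiv.Perm (Fin n)} {T : Finset (Fin n)}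
    (hT : SIFOn σ T) {a b : Fin n} (h : Stab σ (T ∩ Finset.Icc a b)) :
    T ∩ Finset.Icc a b = ∅ ∨ T ∩ Finset.Icc a b = T := by
  by_contra! hne
  exact hT a b hne.1 hne.2 h

theorem SIF.of_sifOn_of_interleaved {n : ℕ} {σ : Equiv.Perm (Fin n)} {T : Finset (Fin n)}
    (hstab : Stab σ T) (hT : SIFOn σ T) (hTc : SIFOn σ (Finset.univ \ T))
    {x₀ x₁ x₂ x₃ : Fin n} (h₀₁ : x₀ ≤ x₁) (h₁₂ : x₁ ≤ x₂) (h₂₃ : x₂ ≤ x₃)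
    (hx₀ : x₀ ∉ T) (hx₁ : x₁ ∈ T) (hx₂ : x₂ ∉ T) (hx₃ : x₃ ∈ T) :
    SIF σ := by
  intro a b hne hne_univ hJ
  set J := Finset.Icc a b
  have hsplit : T ∩ J ∪ (Finset.univ \ T) ∩ J = J := by
    rw [← Finset.union_inter_distrib_right, Finset.union_sdiff_of_subset (Finset.subset_univ T),
      Finset.univ_inter]
  have hmem : ∀ x, x ∉ T → x ∈ Finset.univ \ T := fun x hx =>
    Finset.mem_sdiff.mpr ⟨Finset.mem_univ x, hx⟩
  rcases hT.inter_Icc_eq_empty_or_eq (hstab.inter hJ) with hTJ | hTJ <;>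
    rcases hTc.inter_Icc_eq_empty_or_eq (hstab.compl.inter hJ) with hTcJ | hTcJ
  · rw [hTJ, hTcJ, Finset.empty_union] at hsplit
    exact hne.ne_empty hsplit.symm
  · have hJ₀ : x₀ ∈ J := Finset.mem_of_mem_inter_right (hTcJ ▸ hmem x₀ hx₀)
    have hJ₂ : x₂ ∈ J := Finset.mem_of_mem_inter_right (hTcJ ▸ hmem x₂ hx₂)
    have hJ₁ : x₁ ∈ J := Finset.mem_Icc.mpr
      ⟨(Finset.mem_Icc.mp hJ₀).1.trans h₀₁, h₁₂.trans (Finset.mem_Icc.mp hJ₂).2⟩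
    exact Finset.notMem_empty x₁ (hTJ ▸ Finset.mem_inter.mpr ⟨hx₁, hJ₁⟩)
  · have hJ₁ : x₁ ∈ J := Finset.mem_of_mem_inter_right (hTJ ▸ hx₁)
    have hJ₃ : x₃ ∈ J := Finset.mem_of_mem_inter_right (hTJ ▸ hx₃)
    have hJ₂ : x₂ ∈ J := Finset.mem_Icc.mpr
      ⟨(Finset.mem_Icc.mp hJ₁).1.trans h₁₂, h₂₃.trans (Finset.mem_Icc.mp hJ₃).2⟩
    exact Finset.notMem_empty x₂ (hTcJ ▸ Finset.mem_inter.mpr ⟨hmem x₂ hx₂, hJ₂⟩)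
  · rw [hTJ, hTcJ, Finset.union_sdiff_of_subset (Finset.subset_univ T)] at hsplit
    exact hne_univ hsplit.symm

theorem stmt7_general (n k j : ℕ) (hk : 1 ≤ k) (hkj : k < j) (hj : j ≤ n - 2)
    (σ : Equiv.Perm (Fin n)) (en : Fin n) (hen : (en : ℕ) + 1 = n)
    (hstab : Stab σ (insert en (intervalI n k j)))
    (hρ : SIFOn σ (insert en (intervalI n k j)))
    (hτ : SIFOn σ (Finset.univ \ insert en (intervalI n k j))) :
    SIF σ := by
  refine SIF.of_sifOn_of_interleaved hstab hρ hτ (x₀ := ⟨k - 1, by omega⟩) (x₁ := ⟨k, by omega⟩)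
    (x₂ := ⟨n + k - j - 1, by omega⟩) (x₃ := en) ?_ ?_ ?_ ?_ ?_ ?_ (Finset.mem_insert_self _ _)
  all_goals simp only [Fin.le_def, Finset.mem_insert, intervalI, Finset.mem_filter,
    Finset.mem_univ, true_and, Fin.ext_iff]
  all_goals omega

/-- If `σ` stabilizes `I ∪ {n}` for an interior interval `I = [k+1, n-j+k-1]` of `[n-1]`
(`1 ≤ k < j ≤ n-2`), its restriction `ρ'` to `I ∪ {n}` is SIF, its restriction `τ` to
`[n-1] \ I` is SIF, `σ⁻¹(n) ∈ I ∪ {n}` and `σ(n) ∈ I`, then `σ` is SIF on `[n]`. -/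
theorem stmt7 (n k j : ℕ) (hn : 2 ≤ n) (hk : 1 ≤ k) (hkj : k < j) (hj : j ≤ n - 2)
    (σ : Equiv.Perm (Fin n)) (en : Fin n) (hen : (en : ℕ) + 1 = n)
    (hstab : Stab σ (insert en (intervalI n k j)))
    (hρ : SIFOn σ (insert en (intervalI n k j)))
    (hτ : SIFOn σ (Finset.univ \ insert en (intervalI n k j)))
    (hpre : σ⁻¹ en ∈ insert en (intervalI n k j))
    (himg : σ en ∈ intervalI n k j) :
    SIF σ :=
  stmt7_general n k j hk hkj hj σ en hen hstab hρ hτ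
end

section
/- The formal power series A(x) = Σ_{n≥0} a_n x^n, where a_n satisfies a_0 = a_1 = 1 and a_n = Σ_{j=2}^{n-2}(j-1)a_j a_{n-j} + (n-1)a_{n-1} for n ≥ 2, satisfies the identity x·A'(x)·(A(x) - 1) = (A(x) - x)·(A(x) - 1) - x as formal power series. -/
/-! With `E = x A' - A = ∑ (n - 1) a_n x^n`, the recurrence says exactly that
`E · A = E - x · A`: the `n`-th coefficient of `E · A` is `∑_j (j - 1) a_j a_{n-j}`, whose
terms `j = 0, 1, n - 1, n` are the ones outside the recurrence's sum. The claimed identity is a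
ring rearrangement of this. -/

open PowerSeries

theorem sum_range_add_three_of_apply_one_eq_zero {M : Type*} [AddCommMonoid M] {f : ℕ → M}
    (hf : f 1 = 0) (m : ℕ) :
    ∑ k ∈ Finset.range (m + 3), f k =
      f 0 + ∑ k ∈ Finset.Icc 2 m, f k + f (m + 1) + f (m + 2) := by
  induction m with
  | zero => simp [Finset.sum_range_succ, hf]
  | succ m ih =>
    rcases m with _ | m
    · simp [Finset.sum_range_succ, hf]
    · rw [Finset.sum_range_succ, ih, Finset.sum_Icc_succ_top (show 2 ≤ m + 1 + 1 by omega)]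
      abel

theorem coeff_X_mul_derivative {R : Type*} [CommSemiring R] (f : R⟦X⟧) (n : ℕ) :
    coeff n (X * d⁄dX R f) = n * coeff n f := by
  rcases n with _ | n
  · simp
  · rw [coeff_succ_X_mul, coeff_derivative]
    push_cast
    ring

theorem X_mul_derivative_sub_self_mk {R : Type*} [CommRing R] (a : ℕ → R) :
    X * d⁄dX R (mk a) - mk a = mk fun n ↦ ((n : R) - 1) * a n := by
  ext n
  simp only [map_sub, coeff_X_mul_derivative, coeff_mk]
  ring

theorem X_mul_derivative_sub_mul_self_of_rec {R : Type*} [CommRing R] (a : ℕ → R)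
    (h0 : a 0 = 1) (h1 : a 1 = 1)
    (hrec : ∀ n : ℕ, 2 ≤ n →
      a n = (∑ j ∈ Finset.Icc 2 (n - 2), ((j : R) - 1) * a j * a (n - j)) +
        ((n : R) - 1) * a (n - 1)) :
    (X * d⁄dX R (mk a) - mk a) * mk a = X * d⁄dX R (mk a) - mk a - X * mk a := by
  rw [X_mul_derivative_sub_self_mk]
  ext n
  rw [coeff_mul, Finset.Nat.sum_antidiagonal_eq_sum_range_succ_mk]
  rcases n with _ | _ | m
  · simp [h0]
  · simp [Finset.sum_range_succ, h0, h1]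
  · rw [sum_range_add_three_of_apply_one_eq_zero (by simp) m]
    have hm := hrec (m + 2) (by omega)
    simp only [show m + 1 + 1 = m + 2 from rfl, Nat.add_sub_cancel, coeff_mk, map_sub,
      coeff_succ_X_mul, Nat.sub_zero, Nat.sub_self, show m + 2 - (m + 1) = 1 by omega, h0, h1]
      at hm ⊢
    push_cast at hm ⊢
    linear_combination -hm

theorem stmt11 (a : ℕ → ℚ) (h0 : a 0 = 1) (h1 : a 1 = 1)
    (hrec : ∀ n : ℕ, 2 ≤ n →
      a n = (∑ j ∈ Finset.Icc 2 (n - 2), ((j : ℚ) - 1) * a j * a (n - j)) +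
        ((n : ℚ) - 1) * a (n - 1))
    (A : PowerSeries ℚ) (hA : A = PowerSeries.mk a) :
    (PowerSeries.X : PowerSeries ℚ) * PowerSeries.derivativeFun A * (A - 1) =
      (A - PowerSeries.X) * (A - 1) - PowerSeries.X := by
  subst hA
  change X * d⁄dX ℚ (mk a) * _ = _
  linear_combination X_mul_derivative_sub_mul_self_of_rec a h0 h1 hrec
end

section
/- If σ is a SIF permutation of [n] with n ≥ 2, and σ' is obtained from σ by deleting n from its cycle, then σ' does not stabilize any proper nonempty initial or terminal subinterval of [n-1]; i.e., any proper subinterval of [n-1] stabilized by σ' is an interior interval [a,b] with 2 ≤ a ≤ b ≤ n-2. -/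
/-- `σ'` is obtained from `σ` (a permutation of `[n]`, modeled as `Fin (n+1)`) by deleting the
largest element `n` from its cycle. -/
def DeleteTop {n : ℕ} (σ : Equiv.Perm (Fin (n + 1))) (σ' : Equiv.Perm (Fin n)) : Prop :=
  ∀ j : Fin n, (σ' j : ℕ) =
    if σ (Fin.castSucc j) = Fin.last n then (σ (Fin.last n) : ℕ) else (σ (Fin.castSucc j) : ℕ)

/-!
If `σ'` stabilizes a set `S`, then `σ` stabilizes `S` or `S ∪ {n}`, according as the cycle of
`n` avoids `S` or passes through it. For an initial interval `S = [1, b]` the second case makes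
`σ` stabilize the complement `[b+1, n-1]`, for a terminal interval `S = [a, n-1]` it is the
interval `[a, n]`; both are proper nonempty intervals of `[n]`, contradicting SIF.
-/

section Stab

variable {m : ℕ} {σ : Equiv.Perm (Fin m)} {S : Finset (Fin m)}

theorem Stab.of_forall_mem (h : ∀ x ∈ S, σ x ∈ S) : Stab σ S :=
  Finset.eq_of_subset_of_card_le (Finset.image_subset_iff.mpr h)
    (Finset.card_image_of_injective S σ.injective).ge

theorem Stab.apply_mem (h : Stab σ S) {x : Fin m} (hx : x ∈ S) : σ x ∈ S :=
  h ▸ Finset.mem_image_of_mem σ hx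

theorem Stab.compl_s16 (h : Stab σ S) : Stab σ Sᶜ := by
  refine Stab.of_forall_mem fun x hx =>
    Finset.mem_compl.mpr fun hσx => Finset.mem_compl.mp hx ?_
  rw [← h] at hσx
  obtain ⟨y, hy, hyx⟩ := Finset.mem_image.mp hσx
  exact σ.injective hyx ▸ hy

theorem SIF.not_stab_of_mem_iff (hσ : SIF σ) {lo hi : ℕ} (hlohi : lo ≤ hi) (hhi : hi < m)
    (hproper : 0 < lo ∨ hi + 1 < m) (hS : ∀ x : Fin m, x ∈ S ↔ lo ≤ x ∧ (x : ℕ) ≤ hi) :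
    ¬ Stab σ S := by
  have hIcc : S = Finset.Icc ⟨lo, by omega⟩ ⟨hi, hhi⟩ := by
    ext x
    simp only [hS, Finset.mem_Icc, Fin.le_def]
  rw [hIcc]
  refine hσ _ _ (Finset.nonempty_Icc.mpr (Fin.le_def.mpr hlohi)) fun huniv => ?_
  have hall (x : Fin m) : lo ≤ x ∧ (x : ℕ) ≤ hi :=
    (hS x).mp (hIcc ▸ huniv ▸ Finset.mem_univ x)
  have hfirst := hall ⟨0, by omega⟩
  have hlast := hall ⟨m - 1, by omega⟩
  simp only at hfirst hlast
  omega

end Stab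

namespace DeleteTop

variable {n : ℕ} {σ : Equiv.Perm (Fin (n + 1))} {σ' : Equiv.Perm (Fin n)}

theorem apply_castSucc (hdel : DeleteTop σ σ') {j : Fin n} (hj : σ j.castSucc ≠ Fin.last n) :
    σ j.castSucc = (σ' j).castSucc :=
  Fin.ext (by rw [Fin.val_castSucc, hdel j, if_neg hj])

theorem apply_last (hdel : DeleteTop σ σ') {j : Fin n} (hj : σ j.castSucc = Fin.last n) :
    σ (Fin.last n) = (σ' j).castSucc :=
  Fin.ext (by rw [Fin.val_castSucc, hdel j, if_pos hj])

theorem stab_or_stab_insert_last (hdel : DeleteTop σ σ') {S : Finset (Fin n)}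
    (hS : Stab σ' S) :
    Stab σ (S.map Fin.castSuccEmb) ∨
      Stab σ (insert (Fin.last n) (S.map Fin.castSuccEmb)) := by
  have hmem : ∀ j ∈ S, σ j.castSucc ≠ Fin.last n → σ j.castSucc ∈ S.map Fin.castSuccEmb :=
    fun j hj hne => hdel.apply_castSucc hne ▸ Finset.mem_map_of_mem _ (hS.apply_mem hj)
  by_cases htop : ∃ j ∈ S, σ j.castSucc = Fin.last n
  · obtain ⟨j₀, hj₀, hσj₀⟩ := htop
    refine .inr (Stab.of_forall_mem fun x hx => ?_)
    rcases Finset.mem_insert.mp hx with rfl | hx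
    · exact Finset.mem_insert_of_mem
        (hdel.apply_last hσj₀ ▸ Finset.mem_map_of_mem _ (hS.apply_mem hj₀))
    · obtain ⟨j, hj, rfl⟩ := Finset.mem_map.mp hx
      by_cases hne : σ j.castSucc = Fin.last n
      · exact hne ▸ Finset.mem_insert_self _ _
      · exact Finset.mem_insert_of_mem (hmem j hj hne)
  · push Not at htop
    refine .inl (Stab.of_forall_mem fun x hx => ?_)
    obtain ⟨j, hj, rfl⟩ := Finset.mem_map.mp hx
    exact hmem j hj (htop j hj)

end DeleteTop

theorem stmt16_general (n : ℕ) (σ : Equiv.Perm (Fin (n + 1))) (hσ : SIF σ)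
    (σ' : Equiv.Perm (Fin n)) (hdel : DeleteTop σ σ') :
    ∀ a b : Fin n, (Finset.Icc a b).Nonempty → Finset.Icc a b ≠ Finset.univ →
      Stab σ' (Finset.Icc a b) → 1 ≤ (a : ℕ) ∧ (b : ℕ) ≤ n - 2 := by
  intro a b hne hproper hstab
  have hab : (a : ℕ) ≤ b := Fin.le_def.mp (Finset.nonempty_Icc.mp hne)
  have hproper' : 0 < (a : ℕ) ∨ (b : ℕ) + 1 < n := by
    by_contra! h
    refine hproper (Finset.eq_univ_of_forall fun x => ?_)
    simp only [Finset.mem_Icc, Fin.le_def]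
    omega
  have hb := b.isLt
  rcases hdel.stab_or_stab_insert_last hstab with h | h <;> rw [Fin.map_castSuccEmb_Icc] at h
  · exact absurd h (hσ.not_stab_of_mem_iff hab (by omega) (by omega)
      (by simp [Fin.le_def]))
  · have hmem : ∀ x : Fin (n + 1),
        x ∈ insert (Fin.last n) (Finset.Icc a.castSucc b.castSucc) ↔
          (a : ℕ) ≤ x ∧ (x : ℕ) ≤ b ∨ (x : ℕ) = n := by
      intro x
      simp only [Finset.mem_insert, Finset.mem_Icc, Fin.le_def, Fin.val_castSucc, Fin.ext_iff,
        Fin.val_last]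
      tauto
    constructor
    · by_contra ha
      refine hσ.not_stab_of_mem_iff (lo := b + 1) (hi := n - 1) (by omega) (by omega) (by omega)
        (fun x => ?_) h.compl_s16
      rw [Finset.mem_compl, hmem]
      omega
    · by_contra hb'
      refine hσ.not_stab_of_mem_iff (lo := a) (hi := n) (by omega) (by omega) (by omega)
        (fun x => ?_) h
      rw [hmem]
      omega

/-- If `σ` is SIF on `[n]` (modeled as `Fin (n+1)`, `n ≥ 1`, so the ambient size is at least
`2`) and `σ'` is obtained by deleting the largest element from its cycle, then every proper
nonempty subinterval `[a,b]` of `[n-1]` stabilized by `σ'` is an interior interval: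
`2 ≤ a` and `b ≤ (n-1) - 1` in 1-indexed terms, i.e. `1 ≤ a` and `b ≤ n - 2` for
`a b : Fin n` (0-indexed). -/
theorem stmt16 (n : ℕ) (hn : 1 ≤ n) (σ : Equiv.Perm (Fin (n + 1))) (hσ : SIF σ)
    (σ' : Equiv.Perm (Fin n)) (hdel : DeleteTop σ σ') :
    ∀ a b : Fin n, (Finset.Icc a b).Nonempty → Finset.Icc a b ≠ Finset.univ →
      Stab σ' (Finset.Icc a b) → 1 ≤ (a : ℕ) ∧ (b : ℕ) ≤ n - 2 :=
  stmt16_general n σ hσ σ' hdel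
end
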